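/- Let G₁ and G₂ be nontrivial groups, not both of order 2. Then the free product G₁ * G₂ contains, for every r ≥ 1, at least 2^r / r pairwise non-conjugate elements each of which is a product of at most 3r generators from fixed generating sets of G₁ and G₂. -/

import Mathlib

/-!
Fix `a ≠ 1` in one factor and `b₁ ≠ b₂`, both `≠ 1` and products of at most two generators, in
the other; this is possible since one factor does not have order two. The `2 ^ r` elements
`a b_{m₁} ⋯ a b_{m_r}` have word length at most `3 r`, and their normal forms are cyclically
reduced. Two conjugate cyclically reduced words of the same length are cyclic rotations of each
other: the reduced words `d u d⁻¹`, where `u` is a rotation of `w₀` or a rotation whose last letter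
`q p` is split as `p ⋯ q`, are closed under conjugation by a letter, and such a word is at least
as long as `w₀`, with equality only when `d` is empty and `u` a rotation. Hence each conjugacy
class contains at most `r` of the elements, and there are at least `2 ^ r / r` classes.
-/

open Monoid

/-- Word length of `g` with respect to a (symmetrized) generating set `S`. -/
noncomputable def wordLength {G : Type*} [Group G] (S : Set G) (g : G) : ℕ :=
  sInf {n | ∃ l : List G, (∀ x ∈ l, x ∈ S ∨ x⁻¹ ∈ S) ∧ l.length = n ∧ l.prod = g}

open List

section ShortProducts

variable {G H : Type*} [Group G] [Group H] {β : Type*}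

def altProd (x : G) (y : β → G) (m : List β) : G := (m.map fun s => x * y s).prod

lemma map_altProd (f : G →* H) (x : G) (y : β → G) (m : List β) :
    f (altProd x y m) = altProd (f x) (fun s => f (y s)) m := by
  simp [altProd, map_list_prod, Function.comp_def]

def IsProdOfAtMost (S : Set G) (n : ℕ) (g : G) : Prop :=
  ∃ l : List G, (∀ x ∈ l, x ∈ S) ∧ l.length ≤ n ∧ l.prod = g

namespace IsProdOfAtMost

variable {S : Set G} {n k : ℕ} {g g' : G}

lemma of_mem (hg : g ∈ S) : IsProdOfAtMost S 1 g := ⟨[g], by simpa using hg, by simp, by simp⟩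

lemma mul (hg : IsProdOfAtMost S n g) (hg' : IsProdOfAtMost S k g') :
    IsProdOfAtMost S (n + k) (g * g') := by
  obtain ⟨l, hl, hlen, rfl⟩ := hg
  obtain ⟨l', hl', hlen', rfl⟩ := hg'
  refine ⟨l ++ l', fun x hx => ?_, by simp; omega, prod_append⟩
  rcases mem_append.1 hx with hx | hx
  exacts [hl x hx, hl' x hx]

lemma mono {T : Set G} (hg : IsProdOfAtMost S n g) (hST : S ⊆ T) : IsProdOfAtMost T n g :=
  let ⟨l, hl, hlen, hprod⟩ := hg
  ⟨l, fun x hx => hST (hl x hx), hlen, hprod⟩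

lemma map (hg : IsProdOfAtMost S n g) (f : G →* H) : IsProdOfAtMost (f '' S) n (f g) := by
  obtain ⟨l, hl, hlen, rfl⟩ := hg
  refine ⟨l.map f, fun x hx => ?_, by simpa using hlen, (map_list_prod f l).symm⟩
  obtain ⟨y, hy, rfl⟩ := mem_map.1 hx
  exact Set.mem_image_of_mem f (hl y hy)

lemma wordLength_le (hg : IsProdOfAtMost S n g) : wordLength S g ≤ n := by
  obtain ⟨l, hl, hlen, hprod⟩ := hg
  refine le_trans (Nat.sInf_le ?_) hlen
  exact ⟨l, fun x hx => .inl (hl x hx), rfl, hprod⟩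

end IsProdOfAtMost

lemma isProdOfAtMost_altProd {S : Set G} {x : G} {y : β → G}
    (hx : IsProdOfAtMost S 1 x) (hy : ∀ s, IsProdOfAtMost S 2 (y s)) (m : List β) :
    IsProdOfAtMost S (3 * m.length) (altProd x y m) := by
  induction m with
  | nil => exact ⟨[], by simp, by simp, rfl⟩
  | cons s m ih =>
    simpa [altProd, mul_add, add_comm] using (hx.mul (hy s)).mul ih

end ShortProducts

open Finset in
lemma card_le_of_forall_ofFn_isRotated {α : Type*} [DecidableEq α] {r : ℕ} {l : List α}
    (hl : l ≠ []) {s : Finset (Fin r → α)} (hs : ∀ v ∈ s, List.ofFn v ~r l) :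
    #s ≤ l.length := by
  calc #s
      ≤ #l.cyclicPermutations.toFinset := by
        refine card_le_card_of_injOn List.ofFn (fun v hv => ?_) List.ofFn_injective.injOn
        simpa [mem_cyclicPermutations_iff] using hs v hv
    _ ≤ l.length := by
        simpa [length_cyclicPermutations_of_ne_nil l hl] using
          toFinset_card_le l.cyclicPermutations

open Finset in
lemma exists_finset_pairwise_not_isConj {α G : Type*} [Fintype α] [Group G] (f : α → G)
    {r : ℕ} (hr : 0 < r) (hfib : ∀ a (s : Finset α), (∀ b ∈ s, IsConj (f a) (f b)) → #s ≤ r) :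
    ∃ S : Finset G, (∀ g ∈ S, ∃ a, f a = g) ∧ (Fintype.card α : ℝ) / r ≤ #S ∧
      (S : Set G).Pairwise fun g g' => ¬ IsConj g g' := by
  classical
  set T := univ.image (ConjClasses.mk ∘ f)
  obtain ⟨S, hSf, hinj, himg⟩ := exists_subset_injOn_image_eq_of_surjOn (f := ConjClasses.mk)
    (Set.range f) T (by
      intro c hc
      obtain ⟨a, -, rfl⟩ := mem_image.1 hc
      exact ⟨f a, ⟨a, rfl⟩, rfl⟩)
  refine ⟨S, hSf, ?_, fun g hg g' hg' hne hconj =>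
    hne (hinj hg hg' (ConjClasses.mk_eq_mk_iff_isConj.2 hconj))⟩
  have hcount : Fintype.card α ≤ r * #S := by
    rw [← card_image_of_injOn hinj, himg]
    refine card_le_mul_card_image _ _ fun c hc => ?_
    obtain ⟨a, -, rfl⟩ := mem_image.1 hc
    exact hfib a _ fun b hb => (ConjClasses.mk_eq_mk_iff_isConj.1 (mem_filter.1 hb).2).symm
  rw [div_le_iff₀ (by exact_mod_cast hr)]
  exact_mod_cast hcount.trans_eq (mul_comm _ _)

lemma exists_many_not_isConj_altProd {G : Type*} [Group G] {S : Set G} {x : G} {y : Bool → G}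
    (hx : IsProdOfAtMost S 1 x) (hy : ∀ s, IsProdOfAtMost S 2 (y s))
    (hrot : ∀ m m' : List Bool, m ≠ [] → m'.length = m.length →
      IsConj (altProd x y m) (altProd x y m') → m' ~r m)
    {r : ℕ} (hr : 1 ≤ r) :
    ∃ T : Finset G, (2 : ℝ) ^ r / r ≤ T.card ∧ (∀ g ∈ T, wordLength S g ≤ 3 * r) ∧
      (T : Set G).Pairwise fun g g' => ¬ IsConj g g' := by
  have hne : ∀ v : Fin r → Bool, List.ofFn v ≠ [] := fun v => by simp; omega
  obtain ⟨T, hT, hcard, hpair⟩ := exists_finset_pairwise_not_isConj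
    (fun v : Fin r → Bool => altProd x y (List.ofFn v)) hr fun v s hs =>
      (card_le_of_forall_ofFn_isRotated (hne v) fun w hw =>
        hrot _ _ (hne v) (by simp) (hs w hw)).trans_eq (by simp)
  refine ⟨T, by simpa using hcard, fun g hg => ?_, hpair⟩
  obtain ⟨v, rfl⟩ := hT g hg
  simpa using (isProdOfAtMost_altProd hx hy (List.ofFn v)).wordLength_le

namespace Monoid.CoprodI

variable {ι : Type*} {M : ι → Type*}

section Reduced

variable [∀ i, Group (M i)]

def prodLetters (l : List (Σ i, M i)) : CoprodI M := (l.map fun p => of p.2).prod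

@[simp] lemma prodLetters_nil : prodLetters ([] : List (Σ i, M i)) = 1 := rfl

@[simp] lemma prodLetters_cons (p : Σ i, M i) (l : List (Σ i, M i)) :
    prodLetters (p :: l) = of p.2 * prodLetters l := by simp [prodLetters]

@[simp] lemma prodLetters_append (l l' : List (Σ i, M i)) :
    prodLetters (l ++ l') = prodLetters l * prodLetters l' := by simp [prodLetters]

def invLetters (l : List (Σ i, M i)) : List (Σ i, M i) :=
  (l.map fun p => ⟨p.1, p.2⁻¹⟩).reverse

@[simp] lemma length_invLetters (l : List (Σ i, M i)) : (invLetters l).length = l.length := by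
  simp [invLetters]

@[simp] lemma prodLetters_invLetters (l : List (Σ i, M i)) :
    prodLetters (invLetters l) = (prodLetters l)⁻¹ := by
  induction l with
  | nil => rfl
  | cons p l ih => simp_all [invLetters]

lemma head?_invLetters (l : List (Σ i, M i)) :
    (invLetters l).head? = l.getLast?.map fun p => ⟨p.1, p.2⁻¹⟩ := by
  rw [invLetters, head?_reverse, getLast?_map]

def Joinable (l l' : List (Σ i, M i)) : Prop :=
  ∀ x ∈ l.getLast?, ∀ y ∈ l'.head?, x.1 ≠ y.1

/-- The fields of `Monoid.CoprodI.Word`, as a predicate on a list of letters. -/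
def IsReduced (l : List (Σ i, M i)) : Prop :=
  (∀ p ∈ l, p.2 ≠ 1) ∧ l.IsChain fun p q => p.1 ≠ q.1

def IsCyclicallyReduced (l : List (Σ i, M i)) : Prop :=
  IsReduced l ∧ l ≠ [] ∧ Joinable l l

lemma isReduced_append {l l' : List (Σ i, M i)} :
    IsReduced (l ++ l') ↔ IsReduced l ∧ IsReduced l' ∧ Joinable l l' := by
  simp only [IsReduced, Joinable, isChain_append, mem_append]
  grind

lemma isReduced_cons {p : Σ i, M i} {l : List (Σ i, M i)} :
    IsReduced (p :: l) ↔ p.2 ≠ 1 ∧ IsReduced l ∧ ∀ y ∈ l.head?, p.1 ≠ y.1 := by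
  simp only [IsReduced, isChain_cons, mem_cons, forall_eq_or_imp]
  tauto

lemma IsReduced.invLetters {l : List (Σ i, M i)} (hl : IsReduced l) :
    IsReduced (invLetters l) := by
  refine ⟨fun x hx => ?_, ?_⟩
  · simp only [CoprodI.invLetters, mem_reverse, mem_map] at hx
    obtain ⟨p, hp, rfl⟩ := hx
    simpa using hl.1 p hp
  · rw [CoprodI.invLetters, isChain_reverse, isChain_map]
    exact hl.2.imp fun _ _ h => h.symm

lemma joinable_invLetters_iff {l d : List (Σ i, M i)} :
    Joinable l (invLetters d) ↔ ∀ x ∈ l.getLast?, ∀ y ∈ d.getLast?, x.1 ≠ y.1 := by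
  simp only [Joinable, head?_invLetters, Option.mem_def, Option.map_eq_some_iff]
  constructor
  · intro h x hx y hy
    exact h x hx ⟨y.1, y.2⁻¹⟩ ⟨y, hy, rfl⟩
  · rintro h x hx _ ⟨y, hy, rfl⟩
    exact h x hx y hy

lemma IsReduced.eq_of_prodLetters_eq {l l' : List (Σ i, M i)} (hl : IsReduced l)
    (hl' : IsReduced l') (h : prodLetters l = prodLetters l') : l = l' := by
  classical
  exact congrArg Word.toList
    (Word.equiv.symm.injective h : (⟨l, hl.1, hl.2⟩ : Word M) = ⟨l', hl'.1, hl'.2⟩)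

lemma IsCyclicallyReduced.append_comm {l l' : List (Σ i, M i)}
    (h : IsCyclicallyReduced (l ++ l')) : IsCyclicallyReduced (l' ++ l) := by
  rcases eq_or_ne l [] with rfl | hl
  · simpa using h
  rcases eq_or_ne l' [] with rfl | hl'
  · simpa using h
  obtain ⟨hred, -, hj⟩ := h
  obtain ⟨hred, hred', hjoin⟩ := isReduced_append.1 hred
  refine ⟨isReduced_append.2 ⟨hred', hred, fun x hx y hy => hj x ?_ y ?_⟩, by simp [hl], ?_⟩
  · rwa [getLast?_append_of_ne_nil _ hl']
  · rwa [head?_append_of_ne_nil _ hl]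
  · intro x hx y hy
    rw [getLast?_append_of_ne_nil _ hl] at hx
    rw [head?_append_of_ne_nil _ hl'] at hy
    exact hjoin x hx y hy

lemma IsCyclicallyReduced.isRotated {l l' : List (Σ i, M i)} (hl : IsCyclicallyReduced l)
    (h : l ~r l') : IsCyclicallyReduced l' := by
  obtain ⟨n, rfl⟩ := h
  rw [rotate_eq_drop_append_take_mod]
  rw [← take_append_drop (n % l.length) l] at hl
  exact hl.append_comm

lemma isReduced_singleton {p : Σ i, M i} (hp : p.2 ≠ 1) : IsReduced [p] :=
  ⟨by simpa using hp, isChain_singleton p⟩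

lemma IsReduced.exists_of_mul {d : List (Σ i, M i)} (hd : IsReduced d) (hne : d ≠ []) {t : ι}
    {g : M t} (hg : g ≠ 1) : ∃ d', IsReduced d' ∧ prodLetters d' = of g * prodLetters d ∧
      ∀ x ∈ d'.getLast?, ∃ y ∈ d.getLast?, x.1 = y.1 := by
  obtain ⟨⟨δ, y⟩, d₀, rfl⟩ := exists_cons_of_ne_nil hne
  obtain ⟨-, hd₀, hhead⟩ := isReduced_cons.1 hd
  by_cases ht : t = δ
  · subst ht
    by_cases hgy : g * y = 1
    · refine ⟨d₀, hd₀, ?_, fun x hx => ⟨x, mem_getLast?_cons hx, rfl⟩⟩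
      rw [prodLetters_cons, ← mul_assoc, ← map_mul, hgy, map_one, one_mul]
    · refine ⟨⟨t, g * y⟩ :: d₀, isReduced_cons.2 ⟨hgy, hd₀, hhead⟩, by simp [mul_assoc], ?_⟩
      simp only [getLast?_cons, Option.mem_def, Option.some.injEq, forall_eq']
      exact ⟨_, rfl, by cases d₀.getLast? <;> rfl⟩
  · refine ⟨⟨t, g⟩ :: ⟨δ, y⟩ :: d₀, isReduced_cons.2 ⟨hg, hd, by simpa using ht⟩, by simp,
      fun x hx => ⟨x, by rwa [getLast?_cons_cons] at hx, rfl⟩⟩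

/-- The middle parts `u` of the conjugates `d u d⁻¹` of a cyclically reduced `w₀`: a cyclic
rotation of `w₀`, or a rotation `core ++ [q * p]` whose last letter is split as `p` in front and
`q` at the end. -/
def IsConjCore (w₀ u : List (Σ i, M i)) : Prop :=
  u ~r w₀ ∨ ∃ (γ : ι) (p q : M γ) (core : List (Σ i, M i)), p ≠ 1 ∧ q ≠ 1 ∧
    core ++ [⟨γ, q * p⟩] ~r w₀ ∧ u = ⟨γ, p⟩ :: (core ++ [⟨γ, q⟩])

def IsConjForm (w₀ : List (Σ i, M i)) (z : CoprodI M) : Prop :=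
  ∃ d u, IsReduced d ∧ IsConjCore w₀ u ∧ Joinable d u ∧ Joinable u (invLetters d) ∧
    z = prodLetters (d ++ u ++ invLetters d)

variable {w₀ : List (Σ i, M i)}

lemma IsConjCore.ne_nil {u : List (Σ i, M i)} (hu : IsConjCore w₀ u) (hw₀ : w₀ ≠ []) :
    u ≠ [] := by
  rcases hu with hu | ⟨γ, p, q, core, -, -, -, rfl⟩
  · exact fun h => hw₀ (isRotated_nil_iff.1 (h ▸ hu).symm)
  · exact cons_ne_nil _ _

lemma IsConjCore.isReduced (hw₀ : IsCyclicallyReduced w₀) {u : List (Σ i, M i)}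
    (hu : IsConjCore w₀ u) : IsReduced u := by
  rcases hu with hu | ⟨γ, p, q, core, hp, hq, hrot, rfl⟩
  · exact (hw₀.isRotated hu.symm).1
  obtain ⟨hred, -, hj⟩ := hw₀.isRotated hrot.symm
  obtain ⟨hcore, -, hlast⟩ := isReduced_append.1 hred
  have hcore_ne : core ≠ [] := by
    rintro rfl
    exact hj _ rfl _ rfl rfl
  refine isReduced_cons.2 ⟨hp, isReduced_append.2 ⟨hcore, isReduced_singleton hq, ?_⟩, ?_⟩
  · simpa [Joinable] using hlast
  · intro y hy
    rw [head?_append_of_ne_nil _ hcore_ne] at hy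
    exact hj ⟨γ, q * p⟩ (by simp) y (by rwa [head?_append_of_ne_nil _ hcore_ne])

lemma IsConjCore.length_le {u : List (Σ i, M i)} (hu : IsConjCore w₀ u) :
    w₀.length ≤ u.length := by
  rcases hu with hu | ⟨γ, p, q, core, -, -, hrot, rfl⟩
  · exact hu.perm.length_eq.ge
  · have := hrot.perm.length_eq
    simp only [length_append, length_cons, length_nil] at this ⊢
    omega

lemma IsConjCore.isRotated_of_length_le {u : List (Σ i, M i)} (hu : IsConjCore w₀ u)
    (hlen : u.length ≤ w₀.length) : u ~r w₀ := by
  rcases hu with hu | ⟨γ, p, q, core, -, -, hrot, rfl⟩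
  · exact hu
  · have := hrot.perm.length_eq
    simp only [length_append, length_cons, length_nil] at this hlen
    omega

lemma IsConjForm.of_core {u : List (Σ i, M i)} (hu : IsConjCore w₀ u) :
    IsConjForm w₀ (prodLetters u) :=
  ⟨[], u, ⟨by simp, isChain_nil⟩, hu, by simp [Joinable], by simp [Joinable, invLetters],
    by simp [invLetters]⟩

lemma IsConjForm.of_conj_letter {u : List (Σ i, M i)} (hu : IsConjCore w₀ u) {t : ι} {g : M t}
    (hg : g ≠ 1) (hhead : ∀ y ∈ u.head?, t ≠ y.1) (hlast : ∀ y ∈ u.getLast?, y.1 ≠ t) :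
    IsConjForm w₀ (of g * prodLetters u * (of g)⁻¹) :=
  ⟨[⟨t, g⟩], u, isReduced_singleton hg, hu, by simpa [Joinable] using hhead,
    by simpa [joinable_invLetters_iff] using hlast, by simp [invLetters, mul_assoc]⟩

lemma IsConjForm.conj_of_isRotated_cons {i : ι} {h : M i} {rest : List (Σ i, M i)}
    (hrot : (⟨i, h⟩ :: rest) ~r w₀) {g : M i} (hg : g ≠ 1) :
    IsConjForm w₀ (of g * prodLetters (⟨i, h⟩ :: rest) * (of g)⁻¹) := by
  by_cases hgh : g * h = 1
  · obtain rfl : g = h⁻¹ := eq_inv_of_mul_eq_one_left hgh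
    convert IsConjForm.of_core (Or.inl ((isRotated_concat _ rest).trans hrot)) using 1
    simp
  · have hrot' : rest ++ [⟨i, g⁻¹ * (g * h)⟩] ~r w₀ := by
      rw [inv_mul_cancel_left]
      exact (isRotated_concat _ rest).trans hrot
    convert IsConjForm.of_core (Or.inr ⟨i, g * h, g⁻¹, rest, hgh, inv_ne_one.2 hg, hrot', rfl⟩)
      using 1
    simp
    group

lemma IsConjForm.conj_of_isRotated_concat {i : ι} {k : M i} {init : List (Σ i, M i)}
    (hrot : (init ++ [⟨i, k⟩]) ~r w₀) {g : M i} (hg : g ≠ 1) :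
    IsConjForm w₀ (of g * prodLetters (init ++ [⟨i, k⟩]) * (of g)⁻¹) := by
  by_cases hkg : k * g⁻¹ = 1
  · obtain rfl : k = g := mul_inv_eq_one.1 hkg
    convert IsConjForm.of_core (Or.inl ((isRotated_concat _ init).symm.trans hrot)) using 1
    simp
    group
  · have hrot' : init ++ [⟨i, k * g⁻¹ * g⟩] ~r w₀ := by rwa [inv_mul_cancel_right]
    convert IsConjForm.of_core (Or.inr ⟨i, g, k * g⁻¹, init, hg, hkg, hrot', rfl⟩) using 1
    simp
    group

lemma IsConjForm.conj_of_split {i : ι} {p q : M i} {core : List (Σ i, M i)}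
    (hrot : core ++ [⟨i, q * p⟩] ~r w₀) (g : M i) :
    IsConjForm w₀ (of g * prodLetters (⟨i, p⟩ :: (core ++ [⟨i, q⟩])) * (of g)⁻¹) := by
  by_cases hgp : g * p = 1
  · obtain rfl : g = p⁻¹ := eq_inv_of_mul_eq_one_left hgp
    convert IsConjForm.of_core (Or.inl hrot) using 1
    simp
    group
  by_cases hqg : q * g⁻¹ = 1
  · obtain rfl : q = g := mul_inv_eq_one.1 hqg
    convert IsConjForm.of_core (Or.inl ((isRotated_concat _ core).symm.trans hrot)) using 1
    simp
    group
  have hrot' : core ++ [⟨i, q * g⁻¹ * (g * p)⟩] ~r w₀ := by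
    rwa [show q * g⁻¹ * (g * p) = q * p by group]
  convert IsConjForm.of_core (Or.inr ⟨i, g * p, q * g⁻¹, core, hgp, hqg, hrot', rfl⟩) using 1
  simp
  group

lemma IsConjCore.isConjForm_conj (hw₀ : IsCyclicallyReduced w₀) {u : List (Σ i, M i)}
    (hu : IsConjCore w₀ u) {t : ι} {g : M t} (hg : g ≠ 1) :
    IsConjForm w₀ (of g * prodLetters u * (of g)⁻¹) := by
  rcases hu with hrot | ⟨γ, p, q, core, hp, hq, hsplit, rfl⟩
  · obtain ⟨⟨α, h⟩, rest, rfl⟩ := exists_cons_of_ne_nil (hw₀.isRotated hrot.symm).2.1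
    by_cases hα : t = α
    · subst hα
      exact .conj_of_isRotated_cons hrot hg
    obtain ⟨init, ⟨β, k⟩, hlast⟩ :=
      (eq_nil_or_concat' (⟨α, h⟩ :: rest)).resolve_left (cons_ne_nil _ _)
    by_cases hβ : t = β
    · subst hβ
      rw [hlast] at hrot ⊢
      exact .conj_of_isRotated_concat hrot hg
    refine .of_conj_letter (Or.inl hrot) hg (by simpa using hα) ?_
    simpa [hlast] using Ne.symm hβ
  · by_cases hγ : t = γ
    · subst hγ
      exact .conj_of_split hsplit g
    exact .of_conj_letter (Or.inr ⟨γ, p, q, core, hp, hq, hsplit, rfl⟩) hg (by simpa using hγ)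
      (by rw [← cons_append, getLast?_concat]; simpa using Ne.symm hγ)

lemma IsConjForm.conj_of (hw₀ : IsCyclicallyReduced w₀) {z : CoprodI M}
    (hz : IsConjForm w₀ z) {t : ι} (g : M t) : IsConjForm w₀ (of g * z * (of g)⁻¹) := by
  rcases eq_or_ne g 1 with rfl | hg
  · simpa using hz
  obtain ⟨d, u, hd, hu, hdu, hud, rfl⟩ := hz
  rcases eq_or_ne d [] with rfl | hne
  · simpa [invLetters] using hu.isConjForm_conj hw₀ hg
  obtain ⟨d', hd', hprod, hlast⟩ := hd.exists_of_mul hne hg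
  refine ⟨d', u, hd', hu, fun x hx y hy => ?_, ?_, ?_⟩
  · obtain ⟨x', hx', hxx'⟩ := hlast x hx
    exact hxx' ▸ hdu x' hx' y hy
  · rw [joinable_invLetters_iff] at hud ⊢
    intro x hx y hy
    obtain ⟨y', hy', hyy'⟩ := hlast y hy
    exact hyy' ▸ hud x hx y' hy'
  · simp only [prodLetters_append, prodLetters_invLetters, hprod]
    group

lemma IsConjForm.conj (hw₀ : IsCyclicallyReduced w₀) {z : CoprodI M} (hz : IsConjForm w₀ z)
    (c : CoprodI M) : IsConjForm w₀ (c * z * c⁻¹) := by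
  induction c using induction_left with
  | one => simpa using hz
  | mul g c ih =>
    rw [show of g * c * z * (of g * c)⁻¹ = of g * (c * z * c⁻¹) * (of g)⁻¹ by group]
    exact ih.conj_of hw₀ g

theorem isRotated_of_isConj (hw₀ : IsCyclicallyReduced w₀) {w : List (Σ i, M i)}
    (hw : IsReduced w) (hlen : w.length = w₀.length)
    (h : IsConj (prodLetters w₀) (prodLetters w)) : w ~r w₀ := by
  obtain ⟨c, hc⟩ := isConj_iff.1 h
  have hconj := (IsConjForm.of_core (Or.inl (IsRotated.refl w₀))).conj hw₀ c
  rw [hc] at hconj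
  obtain ⟨d, u, hd, hu, hdu, hud, heq⟩ := hconj
  have hne : u ≠ [] := hu.ne_nil hw₀.2.1
  have hdu' : Joinable d (u ++ invLetters d) := by
    rwa [Joinable, head?_append_of_ne_nil _ hne]
  have hred : IsReduced (d ++ u ++ invLetters d) := by
    rw [append_assoc]
    exact isReduced_append.2 ⟨hd, isReduced_append.2 ⟨hu.isReduced hw₀, hd.invLetters, hud⟩, hdu'⟩
  obtain rfl := hw.eq_of_prodLetters_eq hred heq
  simp only [length_append, length_invLetters] at hlen
  have hle := hu.length_le
  obtain rfl : d = [] := length_eq_zero_iff.1 (by omega)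
  simpa [invLetters] using hu.isRotated_of_length_le (by omega)

end Reduced

section AltLetters

variable {i j : ι} {β : Type*} (a : M i) (b : β → M j)

def altLetters (m : List β) : List (Σ i, M i) :=
  m.flatMap fun s => [⟨i, a⟩, ⟨j, b s⟩]

@[simp] lemma altLetters_nil : altLetters a b [] = [] := rfl

@[simp] lemma altLetters_cons (s : β) (m : List β) :
    altLetters a b (s :: m) = ⟨i, a⟩ :: ⟨j, b s⟩ :: altLetters a b m := rfl

@[simp] lemma length_altLetters (m : List β) : (altLetters a b m).length = 2 * m.length := by
  induction m with
  | nil => rfl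
  | cons s m ih =>
    simp only [altLetters_cons, length_cons, ih]
    ring

lemma altLetters_rotate (m : List β) (k : ℕ) :
    altLetters a b (m.rotate k) = (altLetters a b m).rotate (2 * k) := by
  induction k generalizing m with
  | zero => simp
  | succ k ih =>
    have hone : ∀ m : List β, altLetters a b (m.rotate 1) = (altLetters a b m).rotate 2 := by
      rintro (_ | ⟨s, m⟩) <;> simp [altLetters, rotate_cons_succ]
    rw [← rotate_rotate, hone, ih, rotate_rotate, mul_add_one]

variable {a b}

lemma altLetters_injective (hb : Function.Injective b) : Function.Injective (altLetters a b) := by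
  intro m m' h
  induction m generalizing m' with
  | nil => cases m' <;> simp_all
  | cons s m ih =>
    cases m' with
    | nil => simp at h
    | cons s' m' =>
      simp only [altLetters_cons, cons.injEq, Sigma.mk.injEq, heq_eq_eq, true_and] at h
      rw [hb h.1, ih h.2]

lemma isRotated_of_isRotated_altLetters (hij : i ≠ j) (hb : Function.Injective b)
    {m m' : List β} (hm' : m' ≠ []) (h : altLetters a b m ~r altLetters a b m') : m ~r m' := by
  obtain ⟨n, hn⟩ := h
  obtain ⟨k, rfl | rfl⟩ := Nat.even_or_odd' n
  · exact ⟨k, altLetters_injective hb (by rwa [altLetters_rotate])⟩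
  · -- an odd rotation starts with a letter from the factor `j`
    rw [← rotate_rotate, ← altLetters_rotate] at hn
    obtain ⟨s', m₀', rfl⟩ := exists_cons_of_ne_nil hm'
    cases hmk : m.rotate k with
    | nil => simp [hmk] at hn
    | cons s m₀ =>
      rw [hmk] at hn
      have := congrArg (fun l => l.head?.map Sigma.fst) hn
      simp [rotate_cons_succ] at this
      exact (hij this.symm).elim

end AltLetters

variable [∀ i, Group (M i)] {i j : ι} {β : Type*} {a : M i} {b : β → M j}

lemma isReduced_altLetters (hij : i ≠ j) (ha : a ≠ 1) (hb : ∀ s, b s ≠ 1) (m : List β) :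
    IsReduced (altLetters a b m) := by
  induction m with
  | nil => exact ⟨by simp, isChain_nil⟩
  | cons s m ih =>
    refine isReduced_cons.2 ⟨ha, isReduced_cons.2 ⟨hb s, ih, ?_⟩, by simpa using hij⟩
    cases m <;> simp [hij.symm]

lemma isCyclicallyReduced_altLetters (hij : i ≠ j) (ha : a ≠ 1) (hb : ∀ s, b s ≠ 1)
    {m : List β} (hm : m ≠ []) : IsCyclicallyReduced (altLetters a b m) := by
  refine ⟨isReduced_altLetters hij ha hb m, fun h => hm (by simpa using congrArg length h),
    fun x hx y hy => ?_⟩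
  obtain ⟨s₀, m₀, hm₀⟩ := exists_cons_of_ne_nil hm
  obtain ⟨init, s, rfl⟩ := (eq_nil_or_concat' m).resolve_left hm
  simp only [altLetters, flatMap_append, flatMap_cons, flatMap_nil, append_nil, getLast?_append,
    getLast?_cons_cons, getLast?_singleton, Option.some_or, Option.mem_def, Option.some.injEq] at hx
  simp only [hm₀, altLetters_cons, head?_cons, Option.mem_def, Option.some.injEq] at hy
  subst hx hy
  exact hij.symm

theorem isRotated_of_isConj_altLetters (hij : i ≠ j) (ha : a ≠ 1) (hb : ∀ s, b s ≠ 1)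
    (hb' : Function.Injective b) {m m' : List β} (hm : m ≠ []) (hlen : m'.length = m.length)
    (h : IsConj (prodLetters (altLetters a b m)) (prodLetters (altLetters a b m'))) :
    m' ~r m := by
  have hm' : m' ≠ [] := by
    rintro rfl
    exact hm (length_eq_zero_iff.1 hlen.symm)
  refine isRotated_of_isRotated_altLetters hij hb' hm (isRotated_of_isConj
    (isCyclicallyReduced_altLetters hij ha hb hm) (isReduced_altLetters hij ha hb m') ?_ h)
  simp [hlen]

lemma prodLetters_altLetters (a : M i) (b : β → M j) (m : List β) :
    prodLetters (altLetters a b m) = altProd (of a) (fun s => of (b s)) m := by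
  induction m with
  | nil => rfl
  | cons s m ih => simp_all [altProd, mul_assoc]

theorem isRotated_of_isConj_altProd {H : Type*} [Group H] (f : H →* CoprodI M) {x : H}
    {y : β → H} (hx : f x = .of a) (hy : ∀ s, f (y s) = .of (b s)) (hij : i ≠ j) (ha : a ≠ 1)
    (hb : ∀ s, b s ≠ 1) (hb' : Function.Injective b) {m m' : List β} (hm : m ≠ []) (hlen : m'.length = m.length)
    (h : IsConj (altProd x y m) (altProd x y m')) : m' ~r m := by
  refine isRotated_of_isConj_altLetters hij ha hb hb' hm hlen ?_
  simpa [prodLetters_altLetters, map_altProd, hx, hy] using f.map_isConj h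

end Monoid.CoprodI

namespace Subgroup

variable {G : Type*} [Group G] {E : Set G}

lemma exists_mem_ne_one_of_closure_eq_top [Nontrivial G] (hE : closure E = ⊤) :
    ∃ a ∈ E, a ≠ 1 := by
  by_contra! h
  exact bot_ne_top ((closure_eq_bot_iff.2 fun x hx => h x hx).symm.trans hE)

lemma exists_injective_isProdOfAtMost_two [Nontrivial G] (hcard : Nat.card G ≠ 2)
    (hE : closure E = ⊤) :
    ∃ b : Bool → G, Function.Injective b ∧ (∀ s, b s ≠ 1) ∧ ∀ s, IsProdOfAtMost E 2 (b s) := by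
  obtain ⟨e, he, he1⟩ := exists_mem_ne_one_of_closure_eq_top hE
  have hshort : IsProdOfAtMost E 2 e := ⟨[e], by simpa using he, by simp, by simp⟩
  by_cases hsq : e * e = 1
  · -- otherwise `E ⊆ {1, e}` generates a group of order `orderOf e = 2`
    obtain ⟨e', he', he'1, he'e⟩ : ∃ e' ∈ E, e' ≠ 1 ∧ e' ≠ e := by
      by_contra! hE'
      have htop : zpowers e = ⊤ := top_unique <| hE ▸ closure_le _ |>.2 fun x hx => by
        rcases eq_or_ne x 1 with rfl | hx1
        · exact one_mem _
        · exact hE' x hx hx1 ▸ mem_zpowers e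
      have : orderOf e = 2 := orderOf_eq_prime (p := 2) (by rwa [sq]) he1
      exact hcard (by rw [← card_top, ← htop, Nat.card_zpowers, this])
    refine ⟨fun s => cond s e' e, Bool.injective_iff.2 he'e.symm, by simp [he1, he'1], ?_⟩
    rintro (_ | _)
    exacts [hshort, ⟨[e'], by simpa using he', by simp, by simp⟩]
  · refine ⟨fun s => cond s (e * e) e, Bool.injective_iff.2 ?_, by simp [he1, hsq], ?_⟩
    · simpa [eq_comm] using he1
    rintro (_ | _)
    exacts [hshort, ⟨[e, e], by simp [he], by simp, by simp⟩]

end Subgroup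

universe u v

/-- The factors of `G₁ ∗ G₂` as a `Bool`-indexed family in a common universe. -/
abbrev pairFamily (G₁ : Type u) (G₂ : Type v) : Bool → Type max u v :=
  fun s => cond s (ULift.{u} G₂) (ULift.{v} G₁)

instance (G₁ : Type u) (G₂ : Type v) [Group G₁] [Group G₂] :
    ∀ s, Group (pairFamily G₁ G₂ s)
  | false => ULift.group
  | true => ULift.group

namespace Monoid.Coprod

variable {G₁ : Type u} {G₂ : Type v} [Group G₁] [Group G₂]

def toCoprodI : Coprod G₁ G₂ →* CoprodI (pairFamily G₁ G₂) :=
  lift ((CoprodI.of (i := false)).comp MulEquiv.ulift.symm.toMonoidHom)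
    ((CoprodI.of (i := true)).comp MulEquiv.ulift.symm.toMonoidHom)

@[simp] lemma toCoprodI_inl (x : G₁) :
    toCoprodI (inl x : Coprod G₁ G₂) = CoprodI.of (i := false) (ULift.up x) := rfl

@[simp] lemma toCoprodI_inr (x : G₂) :
    toCoprodI (inr x : Coprod G₁ G₂) = CoprodI.of (i := true) (ULift.up x) := rfl

variable {β : Type*}

lemma isRotated_of_isConj_altProd_inl_inr {a : G₁} {b : β → G₂} (ha : a ≠ 1)
    (hb : ∀ s, b s ≠ 1) (hb' : Function.Injective b) {m m' : List β} (hm : m ≠ [])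
    (hlen : m'.length = m.length)
    (h : IsConj (altProd (inl a) (fun s => inr (b s)) m)
      (altProd (inl a) (fun s => inr (b s)) m')) :
    m' ~r m :=
  CoprodI.isRotated_of_isConj_altProd (M := pairFamily G₁ G₂) (i := false) (j := true) toCoprodI
    (a := ULift.up a) (b := fun s => ULift.up (b s)) rfl (fun _ => rfl) (by decide)
    (fun h => ha (congrArg ULift.down h)) (fun s h => hb s (congrArg ULift.down h))
    (ULift.up_injective.comp hb') hm hlen h

lemma isRotated_of_isConj_altProd_inr_inl {a : G₂} {b : β → G₁} (ha : a ≠ 1)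
    (hb : ∀ s, b s ≠ 1) (hb' : Function.Injective b) {m m' : List β} (hm : m ≠ [])
    (hlen : m'.length = m.length)
    (h : IsConj (altProd (inr a) (fun s => inl (b s)) m)
      (altProd (inr a) (fun s => inl (b s)) m')) :
    m' ~r m :=
  CoprodI.isRotated_of_isConj_altProd (M := pairFamily G₁ G₂) (i := true) (j := false) toCoprodI
    (a := ULift.up a) (b := fun s => ULift.up (b s)) rfl (fun _ => rfl) (by decide)
    (fun h => ha (congrArg ULift.down h)) (fun s h => hb s (congrArg ULift.down h))
    (ULift.up_injective.comp hb') hm hlen h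

end Monoid.Coprod

theorem many_nonconjugate_short_elements
    {G₁ G₂ : Type*} [Group G₁] [Group G₂] [Nontrivial G₁] [Nontrivial G₂]
    (hnot : ¬ (Nat.card G₁ = 2 ∧ Nat.card G₂ = 2))
    (E₁ : Finset G₁) (E₂ : Finset G₂)
    (hE₁ : Subgroup.closure (E₁ : Set G₁) = ⊤)
    (hE₂ : Subgroup.closure (E₂ : Set G₂) = ⊤) :
    ∀ r : ℕ, 1 ≤ r → ∃ S : Finset (Coprod G₁ G₂),
      ((2 : ℝ) ^ r / r ≤ S.card) ∧
      (∀ g ∈ S,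
        wordLength (Coprod.inl '' (E₁ : Set G₁) ∪ Coprod.inr '' (E₂ : Set G₂)) g ≤ 3 * r) ∧
      (S : Set (Coprod G₁ G₂)).Pairwise fun g g' => ¬ IsConj g g' := by
  intro r hr
  by_cases h₂ : Nat.card G₂ = 2
  · obtain ⟨a, haE, ha⟩ := Subgroup.exists_mem_ne_one_of_closure_eq_top hE₂
    obtain ⟨b, hb', hb, hbE⟩ :=
      Subgroup.exists_injective_isProdOfAtMost_two (fun h₁ => hnot ⟨h₁, h₂⟩) hE₁
    exact exists_many_not_isConj_altProd (.of_mem (.inr ⟨a, haE, rfl⟩))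
      (fun s => ((hbE s).map Coprod.inl).mono Set.subset_union_left)
      (fun _ _ hm hlen => Coprod.isRotated_of_isConj_altProd_inr_inl ha hb hb' hm hlen) hr
  · obtain ⟨a, haE, ha⟩ := Subgroup.exists_mem_ne_one_of_closure_eq_top hE₁
    obtain ⟨b, hb', hb, hbE⟩ := Subgroup.exists_injective_isProdOfAtMost_two h₂ hE₂
    exact exists_many_not_isConj_altProd (.of_mem (.inl ⟨a, haE, rfl⟩))
      (fun s => ((hbE s).map Coprod.inr).mono Set.subset_union_right)
      (fun _ _ hm hlen => Coprod.isRotated_of_isConj_altProd_inl_inr ha hb hb' hm hlen) hr
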